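/- arXiv:2402.08269 — 2 statements merged into one kernel-verified Lean document; each statement's English description precedes it below -/
import Mathlib

section
/- Let x⁽¹⁾ < ⋯ < x⁽ⁿ⁾ be reals (n ≥ 2) and consider a one-hidden-layer scalar ReLU network with N₁ hidden neurons at a parameter θ in the interior of its activation region. Let r be the rank of the differential of θ' ↦ (f_{θ'}(x⁽¹⁾),…,f_{θ'}(x⁽ⁿ⁾)) at θ, and let A(X,θ) be the set of distinct hidden-layer activation patterns {a(x⁽ⁱ⁾,θ) : i = 1,…,n} ⊆ {0,1}^{N₁}. Then ½·|A(X,θ)| ≤ r ≤ 2·|A(X,θ)|. -/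
/-!
At a parameter in the interior of its activation region no preactivation vanishes on the
sample, and nearby the network agrees with the one whose activation pattern is frozen, a
polynomial map of the parameters. Every vector in the range of its differential is, on the sample points sharing
an activation pattern, an affine function of `x`; hence `r ≤ 2 |A|`.

Conversely the range contains the constant vector and the ReLU output of every neuron on the
sample. Along the sorted sample the pattern changes at least `|A| - 1` times. Keep the changes at
positions of the more frequent parity, which are pairwise at least two apart, and for each a
neuron that switches there. A second difference over a three-point window around one of these
changes vanishes on constants and on the ReLU vectors of the other chosen neurons, but not on its
own; so these vectors and the constant are independent, whence `|A| ≤ 2 r`.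
-/

open Finset Filter Topology Module

theorem relu_secondDiff_eq_zero_iff {w b t₀ t₁ t₂ : ℝ} (h₀₁ : t₀ < t₁) (h₁₂ : t₁ < t₂)
    (h₀ : w * t₀ + b ≠ 0) (h₂ : w * t₂ + b ≠ 0) :
    (t₁ - t₀) * (max (w * t₂ + b) 0 - max (w * t₁ + b) 0) -
        (t₂ - t₁) * (max (w * t₁ + b) 0 - max (w * t₀ + b) 0) = 0 ↔
      (0 ≤ w * t₀ + b ↔ 0 ≤ w * t₂ + b) := by
  -- `w * t₁ + b` is a convex combination of the values at `t₀` and `t₂`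
  have hmid : (t₂ - t₀) * (w * t₁ + b) =
      (t₂ - t₁) * (w * t₀ + b) + (t₁ - t₀) * (w * t₂ + b) := by
    ring
  rcases h₀.lt_or_gt with h₀ | h₀ <;> rcases h₂.lt_or_gt with h₂ | h₂
  · have h₁ : w * t₁ + b < 0 := by nlinarith
    rw [max_eq_right h₀.le, max_eq_right h₁.le, max_eq_right h₂.le]
    exact iff_of_true (by ring) (iff_of_false h₀.not_ge h₂.not_ge)
  · refine iff_of_false ?_ fun h => h₀.not_ge (h.2 h₂.le)
    rcases le_or_gt 0 (w * t₁ + b) with h₁ | h₁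
    · rw [max_eq_right h₀.le, max_eq_left h₁, max_eq_left h₂.le]; nlinarith
    · rw [max_eq_right h₀.le, max_eq_right h₁.le, max_eq_left h₂.le]; nlinarith
  · refine iff_of_false ?_ fun h => h₂.not_ge (h.1 h₀.le)
    rcases le_or_gt 0 (w * t₁ + b) with h₁ | h₁
    · rw [max_eq_left h₀.le, max_eq_left h₁, max_eq_right h₂.le]; nlinarith
    · rw [max_eq_left h₀.le, max_eq_right h₁.le, max_eq_right h₂.le]; nlinarith
  · have h₁ : 0 < w * t₁ + b := by nlinarith
    rw [max_eq_left h₀.le, max_eq_left h₁.le, max_eq_left h₂.le]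
    exact iff_of_true (by ring) (iff_of_true h₀.le h₂.le)

theorem nonneg_iff_of_sign_change {w b s s' : ℝ} (hss' : s ≤ s')
    (hflip : ¬(0 ≤ w * s + b ↔ 0 ≤ w * s' + b)) :
    (∀ t ≤ s, (0 ≤ w * t + b ↔ 0 ≤ w * s + b)) ∧
      (∀ t, s' ≤ t → (0 ≤ w * t + b ↔ 0 ≤ w * s' + b)) := by
  rcases le_or_gt 0 (w * s + b) with hs | hs
  · have hs' : w * s' + b < 0 := not_le.1 fun h => hflip (iff_of_true hs h)
    have hw : w < 0 := by nlinarith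
    exact ⟨fun t ht => iff_of_true (by nlinarith) hs,
      fun t ht => iff_of_false (by nlinarith) (by linarith)⟩
  · have hs' : 0 ≤ w * s' + b :=
      not_lt.1 fun h => hflip (iff_of_false (by linarith) (by linarith))
    have hw : 0 < w := by nlinarith
    exact ⟨fun t ht => iff_of_false (by nlinarith) (by linarith),
      fun t ht => iff_of_true (by nlinarith) hs'⟩

section SecondDiff

variable {ι : Type*}

/-- `(x c - x a) * (x d - x c) * (x d - x a)` times the second divided difference of `v` over
`x a, x c, x d`; it vanishes on every vector that is affine in `x`. -/
def secondDiff (x : ι → ℝ) (a c d : ι) : (ι → ℝ) →ₗ[ℝ] ℝ :=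
  (x c - x a) • (LinearMap.proj (R := ℝ) (φ := fun _ : ι => ℝ) d - LinearMap.proj c) -
    (x d - x c) • (LinearMap.proj (R := ℝ) (φ := fun _ : ι => ℝ) c - LinearMap.proj a)

theorem secondDiff_apply (x : ι → ℝ) (a c d : ι) (v : ι → ℝ) :
    secondDiff x a c d v = (x c - x a) * (v d - v c) - (x d - x c) * (v c - v a) := by
  simp [secondDiff]

theorem secondDiff_const_one (x : ι → ℝ) (a c d : ι) : secondDiff x a c d (fun _ => 1) = 0 := by
  simp [secondDiff_apply]

variable [LinearOrder ι] {x : ι → ℝ} (hx : StrictMono x) {w b : ℝ} (hne : ∀ i, w * x i + b ≠ 0)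
  {i j a c d : ι} (hij : i ≤ j) (hflip : ¬(0 ≤ w * x i + b ↔ 0 ≤ w * x j + b))
  (hac : a < c) (hcd : c < d)
include hx hne hij hflip hac hcd

theorem secondDiff_relu_ne_zero (ha : a ≤ i) (hd : j ≤ d) :
    secondDiff x a c d (fun t => max (w * x t + b) 0) ≠ 0 := by
  rw [secondDiff_apply, Ne, relu_secondDiff_eq_zero_iff (hx hac) (hx hcd) (hne a) (hne d)]
  obtain ⟨hleft, hright⟩ := nonneg_iff_of_sign_change (hx.monotone hij) hflip
  rw [hleft _ (hx.monotone ha), hright _ (hx.monotone hd)]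
  exact hflip

theorem secondDiff_relu_eq_zero_of_le (hd : d ≤ i) :
    secondDiff x a c d (fun t => max (w * x t + b) 0) = 0 := by
  rw [secondDiff_apply, relu_secondDiff_eq_zero_iff (hx hac) (hx hcd) (hne a) (hne d)]
  obtain ⟨hleft, -⟩ := nonneg_iff_of_sign_change (hx.monotone hij) hflip
  rw [hleft _ (hx.monotone (hac.trans hcd |>.le.trans hd)), hleft _ (hx.monotone hd)]

theorem secondDiff_relu_eq_zero_of_ge (ha : j ≤ a) :
    secondDiff x a c d (fun t => max (w * x t + b) 0) = 0 := by
  rw [secondDiff_apply, relu_secondDiff_eq_zero_iff (hx hac) (hx hcd) (hne a) (hne d)]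
  obtain ⟨-, hright⟩ := nonneg_iff_of_sign_change (hx.monotone hij) hflip
  rw [hright _ (hx.monotone ha), hright _ (hx.monotone (ha.trans (hac.trans hcd).le))]

end SecondDiff

theorem linearIndependent_option_elim_of_dual {ι K M : Type*} [Fintype ι] [Field K]
    [AddCommGroup M] [Module K M] {v : ι → M} {y : M} (φ : ι → Module.Dual K M) (hy : y ≠ 0)
    (hφy : ∀ i, φ i y = 0) (hdiag : ∀ i, φ i (v i) ≠ 0) (hoff : ∀ i j, i ≠ j → φ i (v j) = 0) :
    LinearIndependent K (fun o : Option ι => o.elim y v) := by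
  rw [Fintype.linearIndependent_iff]
  intro g hg
  rw [Fintype.sum_option] at hg
  have hsome : ∀ i, g (some i) = 0 := by
    intro i
    have h := congrArg (φ i) hg
    simp only [Option.elim, map_add, map_smul, map_sum, hφy, smul_eq_mul, mul_zero, zero_add,
      map_zero] at h
    rw [Finset.sum_eq_single i (fun j _ hji => by rw [hoff i j hji.symm, mul_zero])
      (fun h => absurd (mem_univ i) h)] at h
    exact (mul_eq_zero.1 h).resolve_right (hdiag i)
  simp only [hsome, Option.elim, zero_smul, sum_const_zero, add_zero, smul_eq_zero] at hg
  rintro (_ | i)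
  · exact hg.resolve_right hy
  · exact hsome i

theorem card_image_le_card_filter_ne_add_one {κ : Type*} [DecidableEq κ] {m : ℕ}
    (P : Fin (m + 1) → κ) :
    (univ.image P).card ≤ (univ.filter fun p : Fin m => P p.castSucc ≠ P p.succ).card + 1 := by
  set S := insert (Fin.last m) ((univ.filter fun p : Fin m => P p.castSucc ≠ P p.succ).map
    Fin.castSuccEmb)
  -- every value of `P` is taken again at the end of its run: at a jump or at the last index
  have hrun : ∀ i, ∃ j ∈ S, P j = P i := by
    intro i
    induction i using Fin.reverseInduction with
    | last => exact ⟨_, mem_insert_self _ _, rfl⟩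
    | cast p ih =>
      by_cases h : P p.castSucc = P p.succ
      · obtain ⟨j, hj, hPj⟩ := ih
        exact ⟨j, hj, hPj.trans h.symm⟩
      · exact ⟨_, mem_insert_of_mem (mem_map_of_mem _ (mem_filter.2 ⟨mem_univ _, h⟩)), rfl⟩
  calc (univ.image P).card ≤ (S.image P).card := by
        refine card_le_card fun a ha => ?_
        obtain ⟨i, -, rfl⟩ := mem_image.1 ha
        obtain ⟨j, hj, hPj⟩ := hrun i
        exact mem_image.2 ⟨j, hj, hPj⟩
    _ ≤ S.card := card_image_le
    _ ≤ _ := (card_insert_le _ _).trans (by rw [card_map])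

theorem exists_separated_subset_two_mul_card_ge {m : ℕ} (s : Finset (Fin m)) :
    ∃ t ⊆ s, s.card ≤ 2 * t.card ∧
      ∀ p ∈ t, ∀ q ∈ t, p ≠ q → p.val + 2 ≤ q.val ∨ q.val + 2 ≤ p.val := by
  have hsep : ∀ p q : Fin m, p ≠ q → (Even p.val ↔ Even q.val) →
      p.val + 2 ≤ q.val ∨ q.val + 2 ≤ p.val := by
    intro p q hpq hpar
    have := Fin.val_ne_of_ne hpq
    rw [Nat.even_iff, Nat.even_iff] at hpar
    omega
  have hcard := card_filter_add_card_filter_not (s := s) (fun p : Fin m => Even p.val)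
  rcases le_total (s.filter fun p => ¬Even p.val).card (s.filter fun p => Even p.val).card
    with h | h
  · refine ⟨s.filter fun p => Even p.val, filter_subset _ _, by omega,
      fun p hp q hq hpq => hsep p q hpq ?_⟩
    exact iff_of_true (mem_filter.1 hp).2 (mem_filter.1 hq).2
  · refine ⟨s.filter fun p => ¬Even p.val, filter_subset _ _, by omega,
      fun p hp q hq hpq => hsep p q hpq ?_⟩
    exact iff_of_false (mem_filter.1 hp).2 (mem_filter.1 hq).2

theorem finrank_le_two_mul_card_image_of_piecewise_affine {ι κ : Type*} [Fintype ι]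
    [DecidableEq κ] (P : ι → κ) (x : ι → ℝ) {W : Submodule ℝ (ι → ℝ)}
    (hW : ∀ v ∈ W, ∃ α β : κ → ℝ, ∀ i, v i = α (P i) + β (P i) * x i) :
    finrank ℝ W ≤ 2 * (univ.image P).card := by
  set S := univ.image P
  let P' : ι → S := fun i => ⟨P i, mem_image_of_mem P (mem_univ i)⟩
  let Φ : (S → ℝ) × (S → ℝ) →ₗ[ℝ] (ι → ℝ) :=
    (LinearMap.funLeft ℝ ℝ P').coprod (LinearMap.mulLeft ℝ x ∘ₗ LinearMap.funLeft ℝ ℝ P')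
  have hW_le : W ≤ LinearMap.range Φ := by
    intro v hv
    obtain ⟨α, β, hαβ⟩ := hW v hv
    exact ⟨(α ∘ Subtype.val, β ∘ Subtype.val), funext fun i => by simp [Φ, P', hαβ i, mul_comm]⟩
  calc finrank ℝ W ≤ finrank ℝ (LinearMap.range Φ) := Submodule.finrank_mono hW_le
    _ ≤ finrank ℝ ((S → ℝ) × (S → ℝ)) := LinearMap.finrank_range_le Φ
    _ = 2 * S.card := by simp [two_mul]

abbrev ShallowParams (N : ℕ) := (Fin N → ℝ) × (Fin N → ℝ) × (Fin N → ℝ) × ℝ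

namespace ShallowParams

variable {N : ℕ}

def wCoord (k : Fin N) : ShallowParams N →L[ℝ] ℝ :=
  (ContinuousLinearMap.proj k).comp (ContinuousLinearMap.fst ℝ _ _)

def VCoord (k : Fin N) : ShallowParams N →L[ℝ] ℝ :=
  (ContinuousLinearMap.proj k).comp
    ((ContinuousLinearMap.fst ℝ _ _).comp (ContinuousLinearMap.snd ℝ _ _))

def bCoord (k : Fin N) : ShallowParams N →L[ℝ] ℝ :=
  (ContinuousLinearMap.proj k).comp ((ContinuousLinearMap.fst ℝ _ _).comp
    ((ContinuousLinearMap.snd ℝ _ _).comp (ContinuousLinearMap.snd ℝ _ _)))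

def cCoord : ShallowParams N →L[ℝ] ℝ :=
  (ContinuousLinearMap.snd ℝ _ _).comp
    ((ContinuousLinearMap.snd ℝ _ _).comp (ContinuousLinearMap.snd ℝ _ _))

@[simp] theorem wCoord_apply (k : Fin N) (θ : ShallowParams N) : wCoord k θ = θ.1 k := rfl
@[simp] theorem VCoord_apply (k : Fin N) (θ : ShallowParams N) : VCoord k θ = θ.2.1 k := rfl
@[simp] theorem bCoord_apply (k : Fin N) (θ : ShallowParams N) : bCoord k θ = θ.2.2.1 k := rfl
@[simp] theorem cCoord_apply (θ : ShallowParams N) : cCoord θ = θ.2.2.2 := rfl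

end ShallowParams

open ShallowParams

noncomputable section Network

variable {n N : ℕ} (x : Fin n → ℝ) (w V b : Fin N → ℝ)

def shallowNet (θ : ShallowParams N) (i : Fin n) : ℝ :=
  (∑ k, θ.2.1 k * max (θ.1 k * x i + θ.2.2.1 k) 0) + θ.2.2.2

def activationPattern (i : Fin n) : Fin N → Bool := fun k => decide (0 ≤ w k * x i + b k)

def activationRegion : Set (ShallowParams N) :=
  {θ | ∀ k i, (0 ≤ θ.1 k * x i + θ.2.2.1 k ↔ 0 ≤ w k * x i + b k)}

def frozenNet (θ : ShallowParams N) (i : Fin n) : ℝ :=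
  (∑ k, if 0 ≤ w k * x i + b k then θ.2.1 k * (θ.1 k * x i + θ.2.2.1 k) else 0) + θ.2.2.2

def frozenNetDeriv : ShallowParams N →L[ℝ] (Fin n → ℝ) :=
  ContinuousLinearMap.pi fun i =>
    (∑ k, if 0 ≤ w k * x i + b k then
      V k • (x i • wCoord k + bCoord k) + (w k * x i + b k) • VCoord k else 0) + cCoord

theorem frozenNetDeriv_apply (h : ShallowParams N) (i : Fin n) :
    frozenNetDeriv x w V b h i = (∑ k, if 0 ≤ w k * x i + b k then
      V k * (h.1 k * x i + h.2.2.1 k) + (w k * x i + b k) * h.2.1 k else 0) + h.2.2.2 := by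
  simp only [frozenNetDeriv, ContinuousLinearMap.pi_apply, add_apply,
    _root_.sum_apply, cCoord_apply]
  refine congrArg (· + h.2.2.2) (sum_congr rfl fun k _ => ?_)
  split_ifs
  · simp only [add_apply, smul_apply, smul_eq_mul,
      wCoord_apply, bCoord_apply, VCoord_apply]
    ring
  · rfl

theorem hasFDerivAt_frozenNet (c : ℝ) :
    HasFDerivAt (frozenNet x w b) (frozenNetDeriv x w V b) (w, V, b, c) := by
  refine hasFDerivAt_pi'' fun i => ?_
  rw [frozenNetDeriv, ContinuousLinearMap.proj_pi]
  refine (HasFDerivAt.fun_sum fun k _ => ?_).add cCoord.hasFDerivAt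
  split_ifs
  · exact ((VCoord k).hasFDerivAt (x := (w, V, b, c))).fun_mul
      (((wCoord k).hasFDerivAt.mul_const (x i)).fun_add (bCoord k).hasFDerivAt)
  · exact hasFDerivAt_const 0 _

variable {x w V b}

theorem shallowNet_eventuallyEq_frozenNet {c : ℝ}
    (hint : (w, V, b, c) ∈ interior (activationRegion x w b)) :
    shallowNet x =ᶠ[𝓝 (w, V, b, c)] frozenNet x w b := by
  filter_upwards [mem_interior_iff_mem_nhds.1 hint] with θ hθ
  funext i
  refine congrArg (· + θ.2.2.2) (sum_congr rfl fun k _ => ?_)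
  split_ifs with hk
  · rw [max_eq_left ((hθ k i).2 hk)]
  · rw [max_eq_right (not_le.1 fun h => hk ((hθ k i).1 h)).le, mul_zero]

theorem preactivation_ne_zero_of_mem_interior {c : ℝ}
    (hint : (w, V, b, c) ∈ interior (activationRegion x w b)) (k : Fin N) (i : Fin n) :
    w k * x i + b k ≠ 0 := by
  intro h0
  -- lowering every bias by a small `t > 0` stays in the region, but switches neuron `k` off
  -- at `x i`
  have hcont : Continuous fun t : ℝ => ((w, V, fun k => b k - t, c) : ShallowParams N) := by
    fun_prop
  have hev : ∀ᶠ t in 𝓝 (0 : ℝ), (w, V, fun k => b k - t, c) ∈ activationRegion x w b :=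
    hcont.continuousAt.preimage_mem_nhds (by simpa using mem_interior_iff_mem_nhds.1 hint)
  obtain ⟨t, ht, htpos⟩ :=
    ((hev.filter_mono nhdsWithin_le_nhds).and (self_mem_nhdsWithin (s := Set.Ioi 0))).exists
  have := (ht k i).2 h0.ge
  linarith [show (0 : ℝ) < t from htpos]

end Network

section Rank

variable {n N : ℕ} {x : Fin n → ℝ} {w V b : Fin N → ℝ}

theorem exists_affine_of_mem_range_frozenNetDeriv :
    ∀ v ∈ LinearMap.range (frozenNetDeriv x w V b : ShallowParams N →ₗ[ℝ] (Fin n → ℝ)),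
      ∃ α β : (Fin N → Bool) → ℝ, ∀ i,
        v i = α (activationPattern x w b i) + β (activationPattern x w b i) * x i := by
  rintro _ ⟨h, rfl⟩
  refine ⟨fun a => (∑ k, if a k then V k * h.2.2.1 k + b k * h.2.1 k else 0) + h.2.2.2,
    fun a => ∑ k, if a k then V k * h.1 k + w k * h.2.1 k else 0, fun i => ?_⟩
  simp only [ContinuousLinearMap.coe_coe, frozenNetDeriv_apply, activationPattern,
    decide_eq_true_eq, sum_mul, add_right_comm _ h.2.2.2, ← sum_add_distrib]
  refine congrArg (· + h.2.2.2) (sum_congr rfl fun k _ => ?_)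
  split_ifs <;> ring

theorem relu_mem_range_frozenNetDeriv (k : Fin N) :
    (fun i => max (w k * x i + b k) 0) ∈
      LinearMap.range (frozenNetDeriv x w V b : ShallowParams N →ₗ[ℝ] (Fin n → ℝ)) := by
  refine ⟨(0, Pi.single k 1, 0, 0), funext fun i => ?_⟩
  simp only [ContinuousLinearMap.coe_coe, frozenNetDeriv_apply, Pi.single_apply, Pi.zero_apply,
    zero_mul, add_zero, mul_zero, mul_ite, mul_one, zero_add]
  rw [sum_eq_single k (fun j _ hj => by simp [hj]) (by simp)]
  simp only [if_true]
  rcases le_or_gt 0 (w k * x i + b k) with h | h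
  · rw [if_pos h, max_eq_left h]
  · rw [if_neg h.not_ge, max_eq_right h.le]

theorem one_mem_range_frozenNetDeriv :
    (fun _ => 1) ∈
      LinearMap.range (frozenNetDeriv x w V b : ShallowParams N →ₗ[ℝ] (Fin n → ℝ)) :=
  ⟨(0, 0, 0, 1), funext fun i => by simp [frozenNetDeriv_apply]⟩

end Rank

theorem card_add_one_le_finrank_of_separated {m N : ℕ} {x : Fin (m + 1) → ℝ} (hx : StrictMono x)
    (hm : 2 ≤ m) {w b : Fin N → ℝ} (hne : ∀ k i, w k * x i + b k ≠ 0)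
    {W : Submodule ℝ (Fin (m + 1) → ℝ)} (h1 : (fun _ => 1) ∈ W)
    (hu : ∀ k, (fun i => max (w k * x i + b k) 0) ∈ W) {C : Finset (Fin m)}
    (hC : ∀ p ∈ C, ∀ q ∈ C, p ≠ q → p.val + 2 ≤ q.val ∨ q.val + 2 ≤ p.val)
    (hflip : ∀ p ∈ C, ∃ k, ¬(0 ≤ w k * x p.castSucc + b k ↔ 0 ≤ w k * x p.succ + b k)) :
    C.card + 1 ≤ finrank ℝ W := by
  choose κ hκ using fun p : C => hflip p.1 p.2
  -- the window `p - 1, p, p + 1` (moved right when `p = 0`) straddles the sign change of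
  -- neuron `κ p` between `p` and `p + 1`, and lies on one side of every other sign change in `C`
  let a : C → Fin (m + 1) := fun p => ⟨p.1 - 1, by omega⟩
  let c : C → Fin (m + 1) := fun p => ⟨p.1 - 1 + 1, by omega⟩
  let d : C → Fin (m + 1) := fun p => ⟨p.1 - 1 + 2, by omega⟩
  let v : C → Fin (m + 1) → ℝ := fun p i => max (w (κ p) * x i + b (κ p)) 0
  have hac : ∀ p, a p < c p := fun p => by simp [a, c, Fin.lt_def]
  have hcd : ∀ p, c p < d p := fun p => by simp [c, d, Fin.lt_def]
  have hli : LinearIndependent ℝ (fun o : Option C => o.elim (fun _ => 1) v) := by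
    refine linearIndependent_option_elim_of_dual (fun p => secondDiff x (a p) (c p) (d p))
      (fun h => by simpa using congrFun h 0) (fun p => secondDiff_const_one _ _ _ _)
      (fun p => secondDiff_relu_ne_zero hx (hne _) (Fin.castSucc_lt_succ (i := p.1)).le (hκ p)
        (hac p) (hcd p) ?_ ?_) fun p q hpq => ?_
    · simp [a, Fin.le_def]
    · simp [d, Fin.le_def]; omega
    · rcases hC p.1 p.2 q.1 q.2 (Subtype.val_injective.ne hpq) with h | h
      · refine secondDiff_relu_eq_zero_of_le hx (hne _) (Fin.castSucc_lt_succ (i := q.1)).le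
          (hκ q) (hac p) (hcd p) ?_
        simp [d, Fin.le_def]; omega
      · refine secondDiff_relu_eq_zero_of_ge hx (hne _) (Fin.castSucc_lt_succ (i := q.1)).le
          (hκ q) (hac p) (hcd p) ?_
        simp [a, Fin.le_def]; omega
  have hspan : Submodule.span ℝ (Set.range fun o : Option C => o.elim (fun _ => 1) v) ≤ W := by
    rw [Submodule.span_le]
    rintro _ ⟨_ | p, rfl⟩
    exacts [h1, hu _]
  simpa [finrank_span_eq_card hli] using Submodule.finrank_mono hspan

theorem card_image_activationPattern_le_two_mul_finrank {n N : ℕ} {x : Fin n → ℝ}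
    (hx : StrictMono x) {w b : Fin N → ℝ} (hne : ∀ k i, w k * x i + b k ≠ 0)
    {W : Submodule ℝ (Fin n → ℝ)} (h1 : (fun _ => 1) ∈ W)
    (hu : ∀ k, (fun i => max (w k * x i + b k) 0) ∈ W) :
    (univ.image (activationPattern x w b)).card ≤ 2 * finrank ℝ W := by
  rcases Nat.lt_or_ge n 3 with hn | hn
  · have hA : (univ.image (activationPattern x w b)).card ≤ n := card_image_le.trans (by simp)
    rcases Nat.eq_zero_or_pos n with rfl | hpos
    · omega
    · have : 1 ≤ finrank ℝ W := Submodule.one_le_finrank_iff.2 <|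
        (Submodule.ne_bot_iff W).2 ⟨_, h1, fun h => by simpa using congrFun h ⟨0, hpos⟩⟩
      omega
  · obtain ⟨m, rfl⟩ : ∃ m, n = m + 1 := ⟨n - 1, by omega⟩
    obtain ⟨C, hCsub, hcard, hC⟩ := exists_separated_subset_two_mul_card_ge
      (univ.filter fun p : Fin m =>
        activationPattern x w b p.castSucc ≠ activationPattern x w b p.succ)
    have hflip : ∀ p ∈ C, ∃ k, ¬(0 ≤ w k * x p.castSucc + b k ↔ 0 ≤ w k * x p.succ + b k) := by
      intro p hp
      obtain ⟨k, hk⟩ := Function.ne_iff.1 (mem_filter.1 (hCsub hp)).2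
      exact ⟨k, fun h => hk (decide_eq_decide.2 h)⟩
    have := card_add_one_le_finrank_of_separated hx (by omega) hne h1 hu hC hflip
    have := card_image_le_card_filter_ne_add_one (activationPattern x w b)
    omega

theorem stmt18_general (n : ℕ) (x : Fin n → ℝ) (hx : StrictMono x)
    (N₁ : ℕ) (w V b : Fin N₁ → ℝ) (c : ℝ)
    (F : ((Fin N₁ → ℝ) × (Fin N₁ → ℝ) × (Fin N₁ → ℝ) × ℝ) → (Fin n → ℝ))
    (hF : F = fun θ => fun i =>
      (∑ k, θ.2.1 k * max (θ.1 k * x i + θ.2.2.1 k) 0) + θ.2.2.2)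
    (hint : (w, V, b, c) ∈ interior {θ : (Fin N₁ → ℝ) × (Fin N₁ → ℝ) × (Fin N₁ → ℝ) × ℝ |
      ∀ k i, (0 ≤ θ.1 k * x i + θ.2.2.1 k ↔ 0 ≤ w k * x i + b k)}) :
    let r := Module.finrank ℝ (LinearMap.range
        ((fderiv ℝ F (w, V, b, c) :
            ((Fin N₁ → ℝ) × (Fin N₁ → ℝ) × (Fin N₁ → ℝ) × ℝ) →L[ℝ] (Fin n → ℝ)) :
          ((Fin N₁ → ℝ) × (Fin N₁ → ℝ) × (Fin N₁ → ℝ) × ℝ) →ₗ[ℝ] (Fin n → ℝ)))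
    let Acard := (Finset.univ.image
      (fun i : Fin n => fun k : Fin N₁ => decide (0 ≤ w k * x i + b k))).card
    Acard ≤ 2 * r ∧ r ≤ 2 * Acard := by
  have hD : fderiv ℝ F (w, V, b, c) = frozenNetDeriv x w V b := by
    subst hF
    exact ((hasFDerivAt_frozenNet x w V b c).congr_of_eventuallyEq
      (shallowNet_eventuallyEq_frozenNet hint)).fderiv
  rw [hD]
  exact ⟨card_image_activationPattern_le_two_mul_finrank hx
      (preactivation_ne_zero_of_mem_interior hint) one_mem_range_frozenNetDeriv
      relu_mem_range_frozenNetDeriv,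
    finrank_le_two_mul_card_image_of_piecewise_affine _ x
      exists_affine_of_mem_range_frozenNetDeriv⟩

/-- For a shallow ReLU network at a parameter in the interior of its activation region,
the local dimension `r` (the rank of the differential of the sample map) satisfies
`½·|A(X,θ)| ≤ r ≤ 2·|A(X,θ)|`, where `A(X,θ)` is the set of distinct hidden-layer
activation patterns seen by the sample. -/
theorem stmt18 (n : ℕ) (hn : 2 ≤ n) (x : Fin n → ℝ) (hx : StrictMono x)
    (N₁ : ℕ) (w V b : Fin N₁ → ℝ) (c : ℝ)
    (F : ((Fin N₁ → ℝ) × (Fin N₁ → ℝ) × (Fin N₁ → ℝ) × ℝ) → (Fin n → ℝ))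
    (hF : F = fun θ => fun i =>
      (∑ k, θ.2.1 k * max (θ.1 k * x i + θ.2.2.1 k) 0) + θ.2.2.2)
    (hint : (w, V, b, c) ∈ interior {θ : (Fin N₁ → ℝ) × (Fin N₁ → ℝ) × (Fin N₁ → ℝ) × ℝ |
      ∀ k i, (0 ≤ θ.1 k * x i + θ.2.2.1 k ↔ 0 ≤ w k * x i + b k)}) :
    let r := Module.finrank ℝ (LinearMap.range
        ((fderiv ℝ F (w, V, b, c) :
            ((Fin N₁ → ℝ) × (Fin N₁ → ℝ) × (Fin N₁ → ℝ) × ℝ) →L[ℝ] (Fin n → ℝ)) :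
          ((Fin N₁ → ℝ) × (Fin N₁ → ℝ) × (Fin N₁ → ℝ) × ℝ) →ₗ[ℝ] (Fin n → ℝ)))
    let Acard := (Finset.univ.image
      (fun i : Fin n => fun k : Fin N₁ => decide (0 ≤ w k * x i + b k))).card
    Acard ≤ 2 * r ∧ r ≤ 2 * Acard :=
  stmt18_general n x hx N₁ w V b c F hF hint
end

section
/- Let α ∈ {1,…,2n}^{N₁} be a tuple of activation-pattern indices arising from a parameter θ of a shallow ReLU network on a strictly increasing sample of size n, let ℓ⁰_neurons(α) = |{α₁, α₁−1, …, α_{N₁}, α_{N₁}−1} \ {n, n+1}|, and let A(X,θ) be the set of activation patterns of the sample's points. Then |A(X,θ)| − 2 ≤ ℓ⁰_neurons(α) ≤ 4·|A(X,θ)|. -/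
/-!
Each neuron's activation is monotone or antitone along the sorted sample, so two points with
the same column pattern enclose only points with that pattern. Hence the number of distinct
patterns is one more than the number of consecutive pairs of points whose patterns differ,
and such a switch between points `t` and `t + 1` occurs exactly when some neuron has index
`t + 2` (a suffix) or `n + t + 2` (a prefix). Every switch contributes an index to
`ℓ⁰_neurons`, which gives the lower bound; conversely every index other than `1` and `n + 1`
comes from a switch, each switch accounts for at most two indices, and each index for at most
two elements of `ℓ⁰_neurons`, which gives the upper bound.
-/

open Finset

theorem eq_of_le_of_le_of_eq_of_monotone_or_antitone {β ι α : Type*} [Preorder β]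
    [PartialOrder α] {f : β → ι → α} (hf : ∀ k, Monotone (f · k) ∨ Antitone (f · k))
    {i j l : β} (hij : i ≤ j) (hjl : j ≤ l) (h : f i = f l) : f j = f i := by
  funext k
  have hk : f i k = f l k := congrFun h k
  rcases hf k with hmono | hanti
  · exact le_antisymm (hk ▸ hmono hjl) (hmono hij)
  · exact le_antisymm (hanti hij) (hk ▸ hanti hjl)

theorem card_image_range_succ_eq_card_filter_ne_add_one {β : Type*} [DecidableEq β]
    {g : ℕ → β} (hg : ∀ ⦃i j l⦄, i ≤ j → j ≤ l → g i = g l → g j = g i) (m : ℕ) :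
    #((range (m + 1)).image g) = #((range m).filter fun t => g t ≠ g (t + 1)) + 1 := by
  induction m with
  | zero => simp
  | succ m ih =>
    rw [range_add_one (n := m + 1), image_insert]
    conv_rhs => rw [range_add_one, filter_insert]
    by_cases hm : g m = g (m + 1)
    · have hmem : g (m + 1) ∈ (range (m + 1)).image g :=
        mem_image.2 ⟨m, self_mem_range_succ m, hm⟩
      rw [insert_eq_of_mem hmem, if_neg (not_not.2 hm), ih]
    · have hnotMem : g (m + 1) ∉ (range (m + 1)).image g := by
        intro hmem
        obtain ⟨j, hj, hjm⟩ := mem_image.1 hmem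
        exact hm ((hg (Nat.le_of_lt_succ (mem_range.1 hj)) m.le_succ hjm).trans hjm)
      rw [card_insert_of_notMem hnotMem, if_pos hm, card_insert_of_notMem (by simp), ih]

/-- Value at the `i`-th sample point (1-based) of the activation pattern with index `a`:
for `a ≤ n` the suffix pattern starting at `a`, for `a > n` the prefix pattern of length
`a - n - 1`. -/
def monotonePattern (n a i : ℕ) : Bool :=
  decide (if a ≤ n then a ≤ i else i < a - n)

theorem monotonePattern_monotone_or_antitone (n a : ℕ) :
    Monotone (monotonePattern n a) ∨ Antitone (monotonePattern n a) := by
  unfold monotonePattern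
  split_ifs
  exacts [Or.inl fun i j hij => by simp only [Bool.le_iff_imp, decide_eq_true_eq]; omega,
    Or.inr fun i j hij => by simp only [Bool.le_iff_imp, decide_eq_true_eq]; omega]

theorem monotonePattern_ne_succ_iff {n a i : ℕ} (hi : i + 1 ≤ n) :
    monotonePattern n a i ≠ monotonePattern n a (i + 1) ↔ a = i + 1 ∨ a = n + i + 1 := by
  unfold monotonePattern
  split_ifs <;> simp only [ne_eq, decide_eq_decide] <;> omega

/-- The positions `t` (0-based) at which the pattern with index `a` changes value between the
sample points `t` and `t + 1` are `t = a - 2` for a suffix and `t = a - n - 2` for a prefix. -/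
def switches (n : ℕ) (V : Finset ℕ) : Finset ℕ :=
  (range (n - 1)).filter fun t => t + 2 ∈ V ∨ n + t + 2 ∈ V

/-- The index set whose cardinality is `ℓ⁰_neurons(α)` when `V` is the set of entries of `α`. -/
def neuronIndices (n : ℕ) (V : Finset ℕ) : Finset ℕ :=
  (V ∪ V.image (· - 1)) \ {n, n + 1}

theorem card_switches_le_card_neuronIndices (n : ℕ) (V : Finset ℕ) :
    #(switches n V) ≤ #(neuronIndices n V) := by
  refine card_le_card_of_injOn (fun t => if t + 2 ∈ V then t + 1 else n + t + 2) ?_ ?_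
  · intro t ht
    simp only [switches, mem_coe, mem_filter, mem_range] at ht
    simp only [neuronIndices, mem_coe, mem_sdiff, mem_union, mem_image, mem_insert,
      mem_singleton]
    split_ifs with h
    · exact ⟨Or.inr ⟨t + 2, h, rfl⟩, by omega⟩
    · exact ⟨Or.inl (ht.2.resolve_left h), by omega⟩
  · intro t ht t' ht' h
    simp only [switches, mem_coe, mem_filter, mem_range] at ht ht'
    dsimp only at h
    split_ifs at h <;> omega

theorem card_le_two_mul_card_switches_add_two {n : ℕ} {V : Finset ℕ}
    (hV : ∀ a ∈ V, 1 ≤ a ∧ a ≤ 2 * n) : #V ≤ 2 * #(switches n V) + 2 := by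
  have hcover : V ⊆ {1, n + 1} ∪ (switches n V).image (· + 2) ∪
      (switches n V).image (n + · + 2) := by
    intro a ha
    obtain ⟨ha1, ha2⟩ := hV a ha
    simp only [switches, mem_union, mem_insert, mem_singleton, mem_image, mem_filter,
      mem_range]
    rcases (by omega : a = 1 ∨ a = n + 1 ∨ (2 ≤ a ∧ a ≤ n) ∨ n + 2 ≤ a) with h | h | h | h
    · exact Or.inl (Or.inl (Or.inl h))
    · exact Or.inl (Or.inl (Or.inr h))
    · refine Or.inl (Or.inr ⟨a - 2, ⟨by omega, Or.inl ?_⟩, by omega⟩)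
      rwa [Nat.sub_add_cancel h.1]
    · refine Or.inr ⟨a - n - 2, ⟨by omega, Or.inr ?_⟩, by omega⟩
      rwa [show n + (a - n - 2) + 2 = a by omega]
  calc #V ≤ #({1, n + 1} ∪ (switches n V).image (· + 2) ∪ (switches n V).image (n + · + 2)) :=
        card_le_card hcover
    _ ≤ #({1, n + 1} : Finset ℕ) + #((switches n V).image (· + 2)) +
        #((switches n V).image (n + · + 2)) :=
        (card_union_le _ _).trans (Nat.add_le_add_right (card_union_le _ _) _)
    _ ≤ 2 + #(switches n V) + #(switches n V) :=
        Nat.add_le_add (Nat.add_le_add card_le_two card_image_le) card_image_le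
    _ = 2 * #(switches n V) + 2 := by ring

theorem card_neuronIndices_le_two_mul_card (n : ℕ) (V : Finset ℕ) :
    #(neuronIndices n V) ≤ 2 * #V :=
  calc #(neuronIndices n V) ≤ #(V ∪ V.image (· - 1)) := card_le_card sdiff_subset
    _ ≤ #V + #(V.image (· - 1)) := card_union_le _ _
    _ ≤ 2 * #V := by linarith [card_image_le (s := V) (f := (· - 1))]

def patternColumn {N : ℕ} (n : ℕ) (α : Fin N → ℕ) (t : ℕ) : Fin N → Bool :=
  fun k => monotonePattern n (α k) (t + 1)

theorem card_image_patternColumn {N n : ℕ} (hn : 1 ≤ n) (α : Fin N → ℕ) :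
    #((range n).image (patternColumn n α)) = #(switches n (univ.image α)) + 1 := by
  obtain ⟨m, rfl⟩ : ∃ m, n = m + 1 := ⟨n - 1, by omega⟩
  have hsucc : ∀ t ∈ range m, patternColumn (m + 1) α t ≠ patternColumn (m + 1) α (t + 1) ↔
      t + 2 ∈ univ.image α ∨ m + 1 + t + 2 ∈ univ.image α := fun t ht => by
    simp only [patternColumn, Function.ne_iff,
      monotonePattern_ne_succ_iff (Nat.succ_le_succ (mem_range.1 ht)),
      exists_or, mem_image, mem_univ, true_and]
    rfl
  rw [card_image_range_succ_eq_card_filter_ne_add_one, switches, Nat.add_sub_cancel,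
    filter_congr hsucc]
  refine fun i j l hij hjl h =>
    eq_of_le_of_le_of_eq_of_monotone_or_antitone (fun k => ?_) hij hjl h
  exact (monotonePattern_monotone_or_antitone (m + 1) (α k)).imp
    (·.comp fun _ _ => Nat.succ_le_succ) (·.comp_monotone fun _ _ => Nat.succ_le_succ)

theorem stmt19_general (n : ℕ) (hn : 1 ≤ n) (x : Fin n → ℝ)
    (N₁ : ℕ) (w b : Fin N₁ → ℝ) (α : Fin N₁ → ℕ)
    (hα : ∀ k, 1 ≤ α k ∧ α k ≤ 2 * n)
    (hlink : ∀ k, ∀ j : Fin n,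
      (0 ≤ w k * x j + b k) ↔
        (if α k ≤ n then α k ≤ (j : ℕ) + 1 else (j : ℕ) + 1 < α k - n)) :
    let ℓ0 := (((Finset.univ.image α) ∪ (Finset.univ.image (fun k => α k - 1))) \
      ({n, n + 1} : Finset ℕ)).card
    let Acard := (Finset.univ.image
      (fun j : Fin n => fun k : Fin N₁ => decide (0 ≤ w k * x j + b k))).card
    Acard - 2 ≤ ℓ0 ∧ ℓ0 ≤ 4 * Acard := by
  intro ℓ0 Acard
  set V := univ.image α
  have hAcard : Acard = #(switches n V) + 1 := by
    rw [← card_image_patternColumn hn α, ← image_fin_univ, image_image]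
    exact congrArg card (image_congr fun j _ => funext fun k => decide_eq_decide.2 (hlink k j))
  have hℓ0 : ℓ0 = #(neuronIndices n V) := by
    simp only [ℓ0, neuronIndices, V, image_image]
    rfl
  have hV : ∀ a ∈ V, 1 ≤ a ∧ a ≤ 2 * n := by simpa [V] using hα
  have := card_switches_le_card_neuronIndices n V
  have := card_neuronIndices_le_two_mul_card n V
  have := card_le_two_mul_card_switches_add_two hV
  omega

/-- Comparison between the number of effective neurons `ℓ⁰_neurons(α)` and the number of
activation patterns `|A(X,θ)|` perceived by the sample, for a shallow ReLU network whose
`k`-th hidden neuron realizes the monotone activation pattern `1_{α_k}` (1-based index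
convention: indices `1,…,n` are suffix patterns, indices `n+1,…,2n` are prefix patterns):
`|A(X,θ)| − 2 ≤ ℓ⁰_neurons(α) ≤ 4·|A(X,θ)|`. -/
theorem stmt19 (n : ℕ) (hn : 1 ≤ n) (x : Fin n → ℝ) (hx : StrictMono x)
    (N₁ : ℕ) (w b : Fin N₁ → ℝ) (α : Fin N₁ → ℕ)
    (hα : ∀ k, 1 ≤ α k ∧ α k ≤ 2 * n)
    (hlink : ∀ k, ∀ j : Fin n,
      (0 ≤ w k * x j + b k) ↔
        (if α k ≤ n then α k ≤ (j : ℕ) + 1 else (j : ℕ) + 1 < α k - n)) :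
    let ℓ0 := (((Finset.univ.image α) ∪ (Finset.univ.image (fun k => α k - 1))) \
      ({n, n + 1} : Finset ℕ)).card
    let Acard := (Finset.univ.image
      (fun j : Fin n => fun k : Fin N₁ => decide (0 ≤ w k * x j + b k))).card
    Acard - 2 ≤ ℓ0 ∧ ℓ0 ≤ 4 * Acard :=
  stmt19_general n hn x N₁ w b α hα hlink
end
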